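/- Let φ: ℝ → ℝ be a polynomial of degree d and A a real m × n matrix of rank r. Then the entrywise matrix φ(A) (applying φ to each entry) has rank at most C(r + d, d), i.e., rank(φ(A)) ≤ binom(r+d, d). -/
import Mathlib

open Module Submodule Matrix

theorem rank_entrywise_polynomial {m n : ℕ} (A : Matrix (Fin m) (Fin n) ℝ)
    (p : Polynomial ℝ) (d : ℕ) (hd : p.natDegree = d) :
    (Matrix.of fun i j => p.eval (A i j)).rank ≤ (A.rank + d).choose d := by
  classical
  set r := A.rank with hr
  set V : Submodule ℝ (Fin m → ℝ) := Submodule.span ℝ (Set.range Aᵀ) with hV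
  have hfin : Module.finrank ℝ V = r := (A.rank_eq_finrank_span_cols).symm
  let b : Basis (Fin r) ℝ V := Module.finBasisOfFinrankEq ℝ V hfin
  let colA : Fin n → V := fun j => ⟨Aᵀ j, Submodule.subset_span ⟨j, rfl⟩⟩
  let c : Fin r → Fin n → ℝ := fun l j => b.repr (colA j) l
  let B : Fin m → Fin r → ℝ := fun i l => (b l : Fin m → ℝ) i
  have hA : ∀ i j, A i j = ∑ l, c l j * B i l := by
    intro i j
    have h1 : ((colA j : V) : Fin m → ℝ) = ∑ l, c l j • ((b l : V) : Fin m → ℝ) := by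
      conv_lhs => rw [← b.sum_repr (colA j)]
      push_cast
      rfl
    have h2 := congrFun h1 i
    simpa [colA, Matrix.transpose_apply, Finset.sum_apply] using h2
  let g : Fin (r+1) → Fin m → ℝ := fun l i => if h : (l : ℕ) < r then B i ⟨l, h⟩ else 1
  let S : Finset (Fin m → ℝ) :=
    Finset.image (fun μ : Sym (Fin (r+1)) d =>
      fun i => ((μ : Multiset (Fin (r+1))).map (fun l => g l i)).prod) Finset.univ
  have hbasis_mem : ∀ h : Fin d → Fin (r+1), (fun i => ∏ t, g (h t) i) ∈ S := by
    intro h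
    refine Finset.mem_image.2 ⟨⟨Multiset.map h Finset.univ.val, by simp⟩, Finset.mem_univ _, ?_⟩
    funext i
    simp [Multiset.map_map, Finset.prod, Function.comp_def]
  have hpow : ∀ (j : Fin n) (s : ℕ), s ≤ d →
      (fun i => (A i j) ^ s) ∈ Submodule.span ℝ (S : Set (Fin m → ℝ)) := by
    intro j s hs
    let e : Fin d → Fin (r+1) → ℝ := fun t l =>
      if (t : ℕ) < s then (if h : (l : ℕ) < r then c ⟨l, h⟩ j else 0)
      else (if (l : ℕ) = r then 1 else 0)
    have hfactor : ∀ (i : Fin m) (t : Fin d),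
        (if (t : ℕ) < s then A i j else 1) = ∑ l, e t l * g l i := by
      intro i t
      by_cases ht : (t : ℕ) < s
      · simp only [ht, if_true]
        rw [hA i j, Fin.sum_univ_castSucc]
        have hlast : e t (Fin.last r) * g (Fin.last r) i = 0 := by
          simp [e, g, ht]
        rw [hlast, add_zero]
        refine Finset.sum_congr rfl fun l _ => ?_
        have hl : ((Fin.castSucc l : Fin (r+1)) : ℕ) < r := l.isLt
        simp [e, g, ht, hl]
      · simp only [ht, if_false]
        rw [Fin.sum_univ_castSucc]
        have : ∀ l : Fin r, e t (Fin.castSucc l) * g (Fin.castSucc l) i = 0 := by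
          intro l
          have hl : (l : ℕ) ≠ r := Nat.ne_of_lt l.isLt
          simp [e, ht, hl]
        rw [Finset.sum_congr rfl fun l _ => this l, Finset.sum_const, smul_zero, zero_add]
        simp [e, g, ht]
    have hcard : (Finset.univ.filter fun t : Fin d => (t : ℕ) < s).card = s := by
      have : (Finset.univ.filter fun t : Fin d => (t : ℕ) < s)
          = Finset.map (Fin.castLEEmb hs) Finset.univ := by
        ext t
        simp only [Finset.mem_filter, Finset.mem_univ, true_and, Finset.mem_map,
          Fin.castLEEmb_apply]
        constructor
        · intro h; exact ⟨⟨t, h⟩, rfl⟩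
        · rintro ⟨u, rfl⟩; exact u.isLt
      rw [this, Finset.card_map, Finset.card_univ, Fintype.card_fin]
    have hx : (fun i => (A i j) ^ s) = fun i => ∏ t : Fin d, ∑ l, e t l * g l i := by
      funext i
      have h1 : A i j ^ s = ∏ t : Fin d, (if (t : ℕ) < s then A i j else 1) := by
        rw [Finset.prod_ite, Finset.prod_const, Finset.prod_const, one_pow, mul_one, hcard]
      rw [h1]
      exact Finset.prod_congr rfl fun t _ => hfactor i t
    have hy : (fun i => ∏ t : Fin d, ∑ l, e t l * g l i)
        = ∑ h : Fin d → Fin (r+1), (∏ t, e t (h t)) • (fun i => ∏ t, g (h t) i) := by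
      funext i
      rw [Fintype.prod_sum (fun t l => e t l * g l i)]
      rw [Finset.sum_apply]
      refine Finset.sum_congr rfl fun h _ => ?_
      simp [Finset.prod_mul_distrib]
    rw [hx, hy]
    exact Submodule.sum_mem _ fun h _ =>
      Submodule.smul_mem _ _ (Submodule.subset_span (hbasis_mem h))
  rw [Matrix.rank_eq_finrank_span_cols]
  have hle : Submodule.span ℝ (Set.range (Matrix.of fun i j => p.eval (A i j))ᵀ)
      ≤ Submodule.span ℝ (S : Set (Fin m → ℝ)) := by
    rw [Submodule.span_le]
    rintro _ ⟨j, rfl⟩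
    have hcol : ((Matrix.of fun i j => p.eval (A i j))ᵀ j : Fin m → ℝ)
        = ∑ s ∈ Finset.range (d+1), p.coeff s • (fun i => (A i j) ^ s) := by
      funext i
      rw [Finset.sum_apply]
      simp only [Matrix.transpose_apply, Matrix.of_apply, Pi.smul_apply, smul_eq_mul]
      rw [Polynomial.eval_eq_sum_range' (by omega : p.natDegree < d + 1)]
    rw [hcol]
    exact Submodule.sum_mem _ fun s hs =>
      Submodule.smul_mem _ _ (hpow j s (by simpa using Nat.lt_succ_iff.mp (Finset.mem_range.mp hs)))
  calc finrank ℝ (Submodule.span ℝ (Set.range (Matrix.of fun i j => p.eval (A i j))ᵀ))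
      ≤ finrank ℝ (Submodule.span ℝ (S : Set (Fin m → ℝ))) := Submodule.finrank_mono hle
    _ ≤ S.card := finrank_span_finset_le_card S
    _ ≤ Fintype.card (Sym (Fin (r+1)) d) := Finset.card_image_le.trans (by simp)
    _ = (r + d).choose d := by
        rw [Sym.card_sym_eq_choose, Fintype.card_fin]
        congr 1
        omega
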